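/- arXiv:2401.10807 — 2 statements merged into one kernel-verified Lean document; each statement's English description precedes it below -/
import Mathlib

section
/- Let (V1, V2) be a BCL pair on a complex Hilbert space H whose defect operator C(V1, V2) is a compact operator. Then for every λ ∈ σ(C(V1, V2)) with λ ∉ {0, 1, −1}, one has −λ ∈ σ(C(V1, V2)) and dim E_λ = dim E_{−λ} (both eigenspaces being finite-dimensional). -/
set_option maxHeartbeats 1000000

open ContinuousLinearMap

section Defs

variable {H : Type*} [NormedAddCommGroup H] [InnerProductSpace ℂ H] [CompleteSpace H]

/-- The defect operator `C(V₁, V₂) = I - V₁V₁* - V₂V₂* + V₁V₂V₁*V₂*` of a pair of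
operators on a complex Hilbert space. -/
noncomputable def defectOp (V₁ V₂ : H →L[ℂ] H) : H →L[ℂ] H :=
  1 - V₁ ∘L adjoint V₁ - V₂ ∘L adjoint V₂ + V₁ ∘L V₂ ∘L adjoint V₁ ∘L adjoint V₂

/-- The cross-commutator `[V₂*, V₁] = V₂*V₁ - V₁V₂*`. -/
noncomputable def crossComm (V₁ V₂ : H →L[ℂ] H) : H →L[ℂ] H :=
  adjoint V₂ ∘L V₁ - V₁ ∘L adjoint V₂

/-- An isometric pair: both operators are isometries and they commute. -/
def IsIsometricPair (V₁ V₂ : H →L[ℂ] H) : Prop :=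
  (∀ x : H, ‖V₁ x‖ = ‖x‖) ∧ (∀ x : H, ‖V₂ x‖ = ‖x‖) ∧ V₁ ∘L V₂ = V₂ ∘L V₁

/-- A shift: an isometry `V` such that `(V*)^n x → 0` for every `x`. -/
def IsShift (V : H →L[ℂ] H) : Prop :=
  (∀ x : H, ‖V x‖ = ‖x‖) ∧
    ∀ x : H, Filter.Tendsto (fun n : ℕ => (adjoint V ^ n) x) Filter.atTop (nhds 0)

/-- A BCL pair: an isometric pair whose product is a shift. -/
def IsBCLPair (V₁ V₂ : H →L[ℂ] H) : Prop :=
  IsIsometricPair V₁ V₂ ∧ IsShift (V₁ ∘L V₂)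

/-- A compact normal pair: a BCL pair whose cross-commutator is compact and normal. -/
def IsCompactNormalPair (V₁ V₂ : H →L[ℂ] H) : Prop :=
  IsBCLPair V₁ V₂ ∧ IsCompactOperator ⇑(crossComm V₁ V₂) ∧
    crossComm V₁ V₂ ∘L adjoint (crossComm V₁ V₂) =
      adjoint (crossComm V₁ V₂) ∘L crossComm V₁ V₂

/-- A subspace reduces the pair `(V₁, V₂)` if it is invariant under `V₁, V₂, V₁*, V₂*`. -/
def ReducesPair (V₁ V₂ : H →L[ℂ] H) (S : Submodule ℂ H) : Prop :=
  (∀ x ∈ S, V₁ x ∈ S) ∧ (∀ x ∈ S, V₂ x ∈ S) ∧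
    (∀ x ∈ S, adjoint V₁ x ∈ S) ∧ (∀ x ∈ S, adjoint V₂ x ∈ S)

/-- A pair is irreducible if its only closed reducing subspaces are `⊥` and `⊤`. -/
def IsIrreduciblePair (V₁ V₂ : H →L[ℂ] H) : Prop :=
  ∀ S : Submodule ℂ H, IsClosed (S : Set H) → ReducesPair V₁ V₂ S → S = ⊥ ∨ S = ⊤

/-- An `n`-finite pair: a compact normal pair whose defect operator has `n`-dimensional
range. -/
def IsNFinitePair (n : ℕ) (V₁ V₂ : H →L[ℂ] H) : Prop :=
  IsCompactNormalPair V₁ V₂ ∧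
    Module.rank ℂ (LinearMap.range ((defectOp V₁ V₂ : H →L[ℂ] H) : H →ₗ[ℂ] H)) = n

end Defs

section AuxLemmas

open Pointwise Filter
open scoped NNReal InnerProductSpace

variable {H : Type*} [NormedAddCommGroup H] [InnerProductSpace ℂ H] [CompleteSpace H]

/-- Riesz: eigenspaces of a compact operator for a nonzero eigenvalue are
finite dimensional. -/
lemma aux_finiteDimensional_ker {T : H →L[ℂ] H} (hcpt : IsCompactOperator ⇑T) {l : ℂ}
    (h0 : l ≠ 0) : FiniteDimensional ℂ (LinearMap.ker ((T - l • (1 : H →L[ℂ] H) : H →L[ℂ] H) : H →ₗ[ℂ] H)) := by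
  set E := LinearMap.ker ((T - l • (1 : H →L[ℂ] H) : H →L[ℂ] H) : H →ₗ[ℂ] H) with hE
  have hEc : IsClosed (E : Set H) := isClosed_ker (T - l • (1 : H →L[ℂ] H))
  have heig : ∀ x : H, x ∈ E → T x = l • x := by
    intro x hx
    have := LinearMap.mem_ker.mp hx
    have h2 : T x - l • x = 0 := by simpa using this
    linear_combination (norm := module) h2
  have hK : IsCompact (closure (⇑T '' Metric.closedBall (0:H) 1)) :=
    hcpt.isCompact_closure_image_closedBall 1
  have himg : (Subtype.val '' Metric.closedBall (0:(E:Type _)) 1)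
      = (E : Set H) ∩ Metric.closedBall (0:H) 1 := by
    ext x
    constructor
    · rintro ⟨y, hy, rfl⟩
      refine ⟨y.2, ?_⟩
      simpa [Metric.mem_closedBall, dist_eq_norm] using hy
    · rintro ⟨hx1, hx2⟩
      refine ⟨⟨x, hx1⟩, ?_, rfl⟩
      simpa [Metric.mem_closedBall, dist_eq_norm] using hx2
  have hsub : (Subtype.val '' Metric.closedBall (0:(E:Type _)) 1)
      ⊆ l⁻¹ • closure (⇑T '' Metric.closedBall (0:H) 1) := by
    rw [himg]
    rintro x ⟨hx1, hx2⟩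
    exact Set.mem_smul_set.mpr ⟨T x, subset_closure ⟨x, hx2, rfl⟩, by
      rw [heig x hx1, smul_smul, inv_mul_cancel₀ h0, one_smul]⟩
  have hcomp : IsCompact (Metric.closedBall (0:(E:Type _)) 1) := by
    rw [Subtype.isCompact_iff]
    refine IsCompact.of_isClosed_subset (hK.smul l⁻¹) ?_ hsub
    rw [himg]
    exact hEc.inter Metric.isClosed_closedBall
  exact FiniteDimensional.of_isCompact_closedBall₀ ℂ one_pos hcomp

/-- Nonzero spectral points of a compact self-adjoint operator are eigenvalues. -/
lemma aux_exists_eigenvector {T : H →L[ℂ] H} (hcpt : IsCompactOperator ⇑T)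
    (hsa : IsSelfAdjoint T) {l : ℂ} (hl : l ∈ spectrum ℂ T) (h0 : l ≠ 0) :
    ∃ x : H, ‖x‖ = 1 ∧ T x = l • x := by
  classical
  set S : H →L[ℂ] H := l • 1 - T with hS
  have hre : l = (l.re : ℂ) := hsa.mem_spectrum_eq_re hl
  have hSadj : ContinuousLinearMap.adjoint S = S := by
    rw [hS]
    rw [← star_eq_adjoint, star_sub, star_smul, star_one, hsa.star_eq]
    congr 2
    rw [hre]
    simp
  have hnotunit : ¬ IsUnit S := by
    have := spectrum.mem_iff.mp hl
    rwa [Algebra.algebraMap_eq_smul_one] at this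
  have key : ∀ n : ℕ, ∃ x : H, ‖x‖ = 1 ∧ ‖S x‖ < 1 / (n + 1) := by
    by_contra hcon
    push_neg at hcon
    obtain ⟨n, hn⟩ := hcon
    have hcpos : (0:ℝ) < 1 / (n + 1) := by positivity
    have hbdd : ∀ x : H, ‖x‖ ≤ (n + 1) * ‖S x‖ := by
      intro x
      rcases eq_or_ne x 0 with rfl | hx
      · simp
      · have hnx : (0:ℝ) < ‖x‖ := norm_pos_iff.mpr hx
        have h1 : ‖((‖x‖⁻¹ : ℝ) : ℂ) • x‖ = 1 := by
          rw [norm_smul]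
          simp [abs_of_pos (inv_pos.mpr hnx), inv_mul_cancel₀ hnx.ne']
        have h2 := hn (((‖x‖⁻¹ : ℝ) : ℂ) • x) h1
        rw [map_smul, norm_smul] at h2
        have h3 : (1:ℝ) / (n+1) ≤ ‖x‖⁻¹ * ‖S x‖ := by
          simpa [abs_of_pos (inv_pos.mpr hnx)] using h2
        have h4 : ‖x‖ * (1 / (n+1)) ≤ ‖S x‖ := by
          calc ‖x‖ * (1 / (n+1)) ≤ ‖x‖ * (‖x‖⁻¹ * ‖S x‖) :=
                mul_le_mul_of_nonneg_left h3 hnx.le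
            _ = ‖S x‖ := by field_simp
        calc ‖x‖ = ((n:ℝ) + 1) * (‖x‖ * (1 / (n+1))) := by field_simp
          _ ≤ ((n:ℝ) + 1) * ‖S x‖ := by
              apply mul_le_mul_of_nonneg_left h4 (by positivity)
    have hanti : AntilipschitzWith ((n+1 : ℝ≥0)) S := by
      apply ContinuousLinearMap.antilipschitz_of_bound
      intro x
      simpa using hbdd x
    have hdense : (LinearMap.range (S : H →ₗ[ℂ] H)).topologicalClosure = ⊤ := by
      rw [Submodule.topologicalClosure_eq_top_iff]
      rw [Submodule.eq_bot_iff]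
      intro x hx
      have hSx : S x = 0 := by
        have h5 : ⟪S (S x), x⟫_ℂ = 0 := hx (S (S x)) ⟨S x, rfl⟩
        have h6 : ⟪S x, S x⟫_ℂ = 0 := by
          have h5' : ⟪(ContinuousLinearMap.adjoint S) (S x), x⟫_ℂ = 0 := by
            rw [hSadj]; exact h5
          rwa [adjoint_inner_left] at h5'
        exact inner_self_eq_zero.mp h6
      have := hbdd x
      rw [hSx] at this
      simpa using le_antisymm (by simpa using this) (norm_nonneg x)
    have hbij : Function.Bijective S :=
      (S.bijective_iff_dense_range_and_antilipschitz).mpr ⟨hdense, ⟨_, hanti⟩⟩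
    exact hnotunit (ContinuousLinearMap.isUnit_iff_bijective.mpr hbij)
  choose u hu1 hu2 using key
  have hSu : Tendsto (fun n => S (u n)) atTop (nhds 0) := by
    apply squeeze_zero_norm (fun n => (hu2 n).le)
    exact tendsto_one_div_add_atTop_nhds_zero_nat
  have hK : IsCompact (closure (⇑T '' Metric.closedBall (0:H) 1)) :=
    hcpt.isCompact_closure_image_closedBall 1
  have hmem : ∀ n, T (u n) ∈ closure (⇑T '' Metric.closedBall (0:H) 1) :=
    fun n => subset_closure ⟨u n, by simp [Metric.mem_closedBall, dist_eq_norm, hu1 n], rfl⟩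
  obtain ⟨y, -, φ, hφ, hy⟩ := hK.tendsto_subseq hmem
  have heq : ∀ n : ℕ, u (φ n) = l⁻¹ • (S (u (φ n)) + T (u (φ n))) := by
    intro n
    rw [hS]
    simp only [ContinuousLinearMap.sub_apply, ContinuousLinearMap.smul_apply, ContinuousLinearMap.one_apply]
    rw [sub_add_cancel, smul_smul, inv_mul_cancel₀ h0, one_smul]
  have huφ : Tendsto (fun n => u (φ n)) atTop (nhds (l⁻¹ • y)) := by
    have h7 : Tendsto (fun n => S (u (φ n))) atTop (nhds 0) := by
      simpa [Function.comp_def] using hSu.comp hφ.tendsto_atTop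
    have hy' : Tendsto (fun n => T (u (φ n))) atTop (nhds y) := by
      simpa [Function.comp_def] using hy
    have h8 := (h7.add hy').const_smul (l⁻¹)
    simp only [zero_add] at h8
    exact h8.congr (fun n => (heq n).symm)
  refine ⟨l⁻¹ • y, ?_, ?_⟩
  · have h9 : Tendsto (fun n => ‖u (φ n)‖) atTop (nhds ‖l⁻¹ • y‖) := huφ.norm
    have h10 : Tendsto (fun n => ‖u (φ n)‖) atTop (nhds 1) := by
      simpa [hu1] using tendsto_const_nhds (α := ℝ) (f := (atTop : Filter ℕ)) (a := 1)
    exact tendsto_nhds_unique h9 h10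
  · have h11 : Tendsto (fun n => T (u (φ n))) atTop (nhds (T (l⁻¹ • y))) :=
      (T.continuous.tendsto _).comp huφ
    have h12 : T (l⁻¹ • y) = y := tendsto_nhds_unique h11 hy
    rw [h12, smul_smul, mul_inv_cancel₀ h0, one_smul]

end AuxLemmas

/-- For a BCL pair with compact defect operator, the spectrum of the
defect operator is symmetric away from `0, ±1`, with eigenspaces of equal (finite)
dimension. -/
theorem stmt_1 {H : Type*} [NormedAddCommGroup H] [InnerProductSpace ℂ H] [CompleteSpace H]
    (V₁ V₂ : H →L[ℂ] H)
    (hBCL : IsBCLPair V₁ V₂)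
    (hC : IsCompactOperator ⇑(defectOp V₁ V₂))
    (lam : ℂ) (hlam : lam ∈ spectrum ℂ (defectOp V₁ V₂))
    (h0 : lam ≠ 0) (h1 : lam ≠ 1) (hm1 : lam ≠ -1) :
    -lam ∈ spectrum ℂ (defectOp V₁ V₂) ∧
      FiniteDimensional ℂ (LinearMap.ker ((defectOp V₁ V₂ - lam • (1 : H →L[ℂ] H) : H →L[ℂ] H) : H →ₗ[ℂ] H)) ∧
      FiniteDimensional ℂ (LinearMap.ker ((defectOp V₁ V₂ + lam • (1 : H →L[ℂ] H) : H →L[ℂ] H) : H →ₗ[ℂ] H)) ∧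
      Module.finrank ℂ (LinearMap.ker ((defectOp V₁ V₂ - lam • (1 : H →L[ℂ] H) : H →L[ℂ] H) : H →ₗ[ℂ] H)) =
        Module.finrank ℂ (LinearMap.ker ((defectOp V₁ V₂ + lam • (1 : H →L[ℂ] H) : H →L[ℂ] H) : H →ₗ[ℂ] H)) := by
  obtain ⟨⟨hV1, hV2, hcomm⟩, -⟩ := hBCL
  -- pointwise algebraic relations coming from the isometric pair structure
  have ha : ∀ x : H, adjoint V₁ (V₁ x) = x := fun x => by
    simpa using DFunLike.congr_fun ((norm_map_iff_adjoint_comp_self V₁).mp hV1) x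
  have hb : ∀ x : H, adjoint V₂ (V₂ x) = x := fun x => by
    simpa using DFunLike.congr_fun ((norm_map_iff_adjoint_comp_self V₂).mp hV2) x
  have hab : ∀ x : H, V₁ (V₂ x) = V₂ (V₁ x) := fun x => by
    simpa using DFunLike.congr_fun hcomm x
  have hadjc : adjoint V₁ ∘L adjoint V₂ = adjoint V₂ ∘L adjoint V₁ := by
    rw [← adjoint_comp, ← adjoint_comp, hcomm]
  have hba' : ∀ x : H, adjoint V₂ (adjoint V₁ x) = adjoint V₁ (adjoint V₂ x) := fun x => by
    simpa using (DFunLike.congr_fun hadjc x).symm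
  have h5 : ∀ x : H, adjoint V₁ (V₂ (V₁ x)) = V₂ x := fun x => by rw [← hab, ha]
  have h6 : ∀ x : H, adjoint V₂ (V₁ (V₂ x)) = V₁ x := fun x => by rw [hab, hb]
  have h7 : ∀ x : H, adjoint V₂ (adjoint V₁ (V₂ x)) = adjoint V₁ x := fun x => by
    rw [hba', hb]
  have h8 : ∀ x : H, adjoint V₁ (adjoint V₂ (V₁ x)) = adjoint V₂ x := fun x => by
    rw [← hba', ha]
  have hCx : ∀ x : H, defectOp V₁ V₂ x
      = x - V₁ (adjoint V₁ x) - V₂ (adjoint V₂ x)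
        + V₁ (V₂ (adjoint V₁ (adjoint V₂ x))) := fun x => by
    simp [defectOp]
  -- the three key identities
  have hPWC : ∀ x : H, V₁ (V₂ (adjoint V₂ (adjoint V₁ (defectOp V₁ V₂ x)))) = 0 := by
    intro x
    simp only [hCx, map_sub, map_add, ha, hb, hab, hba', h5, h6, h7, h8]
    abel
  have hanti : ∀ x : H,
      defectOp V₁ V₂ (V₁ (adjoint V₁ x) - V₂ (adjoint V₂ x))
        + (V₁ (adjoint V₁ (defectOp V₁ V₂ x)) - V₂ (adjoint V₂ (defectOp V₁ V₂ x))) = 0 := by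
    intro x
    simp only [hCx, map_sub, map_add, ha, hb, hab, hba', h5, h6, h7, h8]
    abel
  have hsq : ∀ x : H,
      (V₁ (adjoint V₁ (V₁ (adjoint V₁ x) - V₂ (adjoint V₂ x)))
        - V₂ (adjoint V₂ (V₁ (adjoint V₁ x) - V₂ (adjoint V₂ x))))
        + defectOp V₁ V₂ (defectOp V₁ V₂ x)
        + V₁ (V₂ (adjoint V₂ (adjoint V₁ x))) = x := by
    intro x
    simp only [hCx, map_sub, map_add, ha, hb, hab, hba', h5, h6, h7, h8]
    abel
  -- self-adjointness of the defect operator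
  have hCadj : ContinuousLinearMap.adjoint (defectOp V₁ V₂) = defectOp V₁ V₂ := by
    have hc1 : adjoint (V₁ ∘L adjoint V₁) = V₁ ∘L adjoint V₁ := by
      rw [adjoint_comp, adjoint_adjoint]
    have hc2 : adjoint (V₂ ∘L adjoint V₂) = V₂ ∘L adjoint V₂ := by
      rw [adjoint_comp, adjoint_adjoint]
    have hc4 : adjoint (V₁ ∘L V₂ ∘L adjoint V₁ ∘L adjoint V₂)
        = V₁ ∘L V₂ ∘L adjoint V₁ ∘L adjoint V₂ := by
      simp only [adjoint_comp, adjoint_adjoint]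
      ext x
      simp [hab, hba']
    rw [defectOp]
    rw [← star_eq_adjoint, star_add, star_sub, star_sub, star_one,
      star_eq_adjoint, star_eq_adjoint, star_eq_adjoint, hc1, hc2, hc4]
  have hCsa : IsSelfAdjoint (defectOp V₁ V₂) := isSelfAdjoint_iff'.mpr hCadj
  -- core injectivity statement
  have hker : ∀ (μ : ℂ), μ ≠ 1 → μ ≠ -1 → μ ≠ 0 → ∀ x : H,
      defectOp V₁ V₂ x = μ • x →
      V₁ (adjoint V₁ x) - V₂ (adjoint V₂ x) = 0 → x = 0 := by
    intro μ hμ1 hμm1 hμ0 x hCeq hA0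
    have hpw : V₁ (V₂ (adjoint V₂ (adjoint V₁ x))) = 0 := by
      have h := hPWC x
      rw [hCeq] at h
      simp only [map_smul] at h
      exact (smul_eq_zero.mp h).resolve_left hμ0
    have h2 : defectOp V₁ V₂ (defectOp V₁ V₂ x) = (μ*μ) • x := by
      rw [hCeq, map_smul, hCeq, smul_smul]
    have h := hsq x
    rw [hA0, h2, hpw] at h
    simp only [map_zero, sub_zero, add_zero, zero_add] at h
    have h3 : (μ * μ - 1) • x = 0 := by
      rw [sub_smul, one_smul, h, sub_self]
    have h4 : μ * μ - 1 ≠ 0 := by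
      intro hcon
      have : (μ - 1) * (μ + 1) = 0 := by ring_nf; linear_combination hcon
      rcases mul_eq_zero.mp this with hh | hh
      · exact hμ1 (by linear_combination hh)
      · exact hμm1 (by linear_combination hh)
    exact (smul_eq_zero.mp h3).resolve_left h4
  -- membership descriptions of the two eigenspaces
  have hmemE : ∀ x : H, x ∈ LinearMap.ker ((defectOp V₁ V₂ - lam • (1 : H →L[ℂ] H) : H →L[ℂ] H) : H →ₗ[ℂ] H)
      ↔ defectOp V₁ V₂ x = lam • x := by
    intro x
    rw [LinearMap.mem_ker]
    constructor
    · intro h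
      have : defectOp V₁ V₂ x - lam • x = 0 := by simpa using h
      linear_combination (norm := module) this
    · intro h
      simp [h]
  have hmemF : ∀ x : H, x ∈ LinearMap.ker ((defectOp V₁ V₂ + lam • (1 : H →L[ℂ] H) : H →L[ℂ] H) : H →ₗ[ℂ] H)
      ↔ defectOp V₁ V₂ x = (-lam) • x := by
    intro x
    rw [LinearMap.mem_ker]
    constructor
    · intro h
      have : defectOp V₁ V₂ x + lam • x = 0 := by simpa using h
      linear_combination (norm := module) this
    · intro h
      simp [h, neg_smul]
  -- the intertwining operator
  set Aop : H →L[ℂ] H := V₁ ∘L adjoint V₁ - V₂ ∘L adjoint V₂ with hAop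
  have hAx : ∀ x : H, Aop x = V₁ (adjoint V₁ x) - V₂ (adjoint V₂ x) := fun x => by
    simp [hAop]
  have hswap : ∀ (μ : ℂ) (x : H), defectOp V₁ V₂ x = μ • x →
      defectOp V₁ V₂ (Aop x) = (-μ) • (Aop x) := by
    intro μ x hx
    have h := hanti x
    rw [hx] at h
    simp only [map_smul] at h
    rw [hAx]
    linear_combination (norm := module) h
  -- finite dimensionality
  have hfinE : FiniteDimensional ℂ
      (LinearMap.ker ((defectOp V₁ V₂ - lam • (1 : H →L[ℂ] H) : H →L[ℂ] H) : H →ₗ[ℂ] H)) :=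
    aux_finiteDimensional_ker hC h0
  have hfinF : FiniteDimensional ℂ
      (LinearMap.ker ((defectOp V₁ V₂ + lam • (1 : H →L[ℂ] H) : H →L[ℂ] H) : H →ₗ[ℂ] H)) := by
    have := aux_finiteDimensional_ker (T := defectOp V₁ V₂) hC (neg_ne_zero.mpr h0)
    have hEq : defectOp V₁ V₂ - (-lam) • (1 : H →L[ℂ] H)
        = defectOp V₁ V₂ + lam • (1 : H →L[ℂ] H) := by
      rw [neg_smul, sub_neg_eq_add]
    rwa [hEq] at this
  -- the two restrictions of Aop
  have hmap1 : ∀ x : H, x ∈ LinearMap.ker ((defectOp V₁ V₂ - lam • (1 : H →L[ℂ] H) : H →L[ℂ] H) : H →ₗ[ℂ] H) →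
      (Aop : H →ₗ[ℂ] H) x ∈ LinearMap.ker ((defectOp V₁ V₂ + lam • (1 : H →L[ℂ] H) : H →L[ℂ] H) : H →ₗ[ℂ] H) := by
    intro x hx
    rw [hmemF]
    exact hswap lam x ((hmemE x).mp hx)
  have hmap2 : ∀ x : H, x ∈ LinearMap.ker ((defectOp V₁ V₂ + lam • (1 : H →L[ℂ] H) : H →L[ℂ] H) : H →ₗ[ℂ] H) →
      (Aop : H →ₗ[ℂ] H) x ∈ LinearMap.ker ((defectOp V₁ V₂ - lam • (1 : H →L[ℂ] H) : H →L[ℂ] H) : H →ₗ[ℂ] H) := by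
    intro x hx
    rw [hmemE]
    have := hswap (-lam) x ((hmemF x).mp hx)
    simpa using this
  set f := LinearMap.restrict (Aop : H →ₗ[ℂ] H) hmap1 with hf
  set g := LinearMap.restrict (Aop : H →ₗ[ℂ] H) hmap2 with hg
  have hfinj : Function.Injective f := by
    rw [← LinearMap.ker_eq_bot, LinearMap.ker_eq_bot']
    intro m hm
    have hm' : Aop (m : H) = 0 := by
      have := congrArg Subtype.val hm
      exact this
    have : (m : H) = 0 := by
      apply hker lam h1 hm1 h0 (m : H) ((hmemE _).mp m.2)
      rw [← hAx]
      exact hm'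
    exact Subtype.ext this
  have hginj : Function.Injective g := by
    rw [← LinearMap.ker_eq_bot, LinearMap.ker_eq_bot']
    intro m hm
    have hm' : Aop (m : H) = 0 := by
      have := congrArg Subtype.val hm
      exact this
    have : (m : H) = 0 := by
      apply hker (-lam) (show -lam ≠ 1 by intro hc; exact hm1 (by linear_combination -hc))
        (show -lam ≠ -1 by intro hc; exact h1 (by linear_combination -hc))
        (neg_ne_zero.mpr h0) (m : H) ((hmemF _).mp m.2)
      rw [← hAx]
      exact hm'
    exact Subtype.ext this
  -- the eigenvector for lam gives one for -lam
  obtain ⟨v, hv1, hv2⟩ := aux_exists_eigenvector hC hCsa hlam h0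
  have hvne : v ≠ 0 := by
    intro h
    rw [h] at hv1
    simp at hv1
  have hwC : defectOp V₁ V₂ (Aop v) = (-lam) • (Aop v) := hswap lam v hv2
  have hwne : Aop v ≠ 0 := by
    intro hw
    apply hvne
    apply hker lam h1 hm1 h0 v hv2
    rw [← hAx]
    exact hw
  constructor
  · -- -lam is in the spectrum
    rw [spectrum.mem_iff]
    intro hunit
    rw [Algebra.algebraMap_eq_smul_one] at hunit
    obtain ⟨u, hu⟩ := hunit
    apply hwne
    have hz : ((-lam) • (1 : H →L[ℂ] H) - defectOp V₁ V₂) (Aop v) = 0 := by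
      simp [ContinuousLinearMap.sub_apply, ContinuousLinearMap.smul_apply, ContinuousLinearMap.one_apply, hwC]
    calc Aop v = ((↑u⁻¹ * ↑u : H →L[ℂ] H)) (Aop v) := by rw [u.inv_mul]; simp
      _ = (↑u⁻¹ : H →L[ℂ] H) ((↑u : H →L[ℂ] H) (Aop v)) := by rw [ContinuousLinearMap.mul_apply]
      _ = 0 := by rw [hu, hz, map_zero]
  refine ⟨hfinE, hfinF, ?_⟩
  exact le_antisymm (LinearMap.finrank_le_finrank_of_injective hfinj)
    (LinearMap.finrank_le_finrank_of_injective hginj)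
end

section
/- Let (V1, V2) be an isometric pair on a complex Hilbert space H such that the orthogonal complement of ker C(V1, V2) equals ker (V1 V2)*. Then dim ker V1* = dim ker V2* as Hilbert-space dimensions. In particular, if ker (V1 V2)* is finite-dimensional, then its dimension is an even number. -/
open ContinuousLinearMap

section
variable {H : Type*} [NormedAddCommGroup H] [InnerProductSpace ℂ H] [CompleteSpace H]
variable (V₁ V₂ : H →L[ℂ] H)

lemma key1 (h2 : adjoint V₂ ∘L V₂ = 1)
    (hker : LinearMap.ker ((defectOp V₁ V₂ : H →L[ℂ] H) : H →ₗ[ℂ] H) = (LinearMap.ker ((adjoint (V₁ ∘L V₂) : H →L[ℂ] H) : H →ₗ[ℂ] H))ᗮ)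
    (x : H) (hx : adjoint V₁ x = 0) (hzx : adjoint V₁ (V₂ x) = 0) : x = 0 := by
  set z := V₂ x with hz
  have hV2z : adjoint V₂ z = x := by
    have := congrArg (fun f => f x) h2
    simpa using this
  have hzK : z ∈ LinearMap.ker ((adjoint (V₁ ∘L V₂) : H →L[ℂ] H) : H →ₗ[ℂ] H) := by
    rw [LinearMap.mem_ker, ContinuousLinearMap.coe_coe, adjoint_comp, comp_apply, hzx, map_zero]
  have hCz : z ∈ LinearMap.ker ((defectOp V₁ V₂ : H →L[ℂ] H) : H →ₗ[ℂ] H) := by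
    rw [LinearMap.mem_ker]
    simp [defectOp, hzx, hV2z, hx, sub_apply, add_apply, comp_apply]
    exact sub_self _
  rw [hker] at hCz
  have hz0 : z = 0 := by
    have h0 : (inner ℂ z z : ℂ) = 0 := hCz z hzK
    simpa using inner_self_eq_zero.mp h0
  have := hV2z
  rw [hz0, map_zero] at this
  exact this.symm

lemma key2 (h1 : adjoint V₁ ∘L V₁ = 1)
    (hker : LinearMap.ker ((defectOp V₁ V₂ : H →L[ℂ] H) : H →ₗ[ℂ] H) = (LinearMap.ker ((adjoint (V₁ ∘L V₂) : H →L[ℂ] H) : H →ₗ[ℂ] H))ᗮ)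
    (y : H) (hy : adjoint V₂ y = 0) (hzy : adjoint V₂ (V₁ y) = 0) : y = 0 := by
  set z := V₁ y with hz
  have hV1z : adjoint V₁ z = y := by
    have := congrArg (fun f => f y) h1
    simpa using this
  have hzK : z ∈ LinearMap.ker ((adjoint (V₁ ∘L V₂) : H →L[ℂ] H) : H →ₗ[ℂ] H) := by
    rw [LinearMap.mem_ker, ContinuousLinearMap.coe_coe, adjoint_comp, comp_apply, hV1z, hy]
  have hCz : z ∈ LinearMap.ker ((defectOp V₁ V₂ : H →L[ℂ] H) : H →ₗ[ℂ] H) := by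
    rw [LinearMap.mem_ker]
    simp [defectOp, hV1z, hzy, sub_apply, add_apply, comp_apply]
    exact sub_self _
  rw [hker] at hCz
  have hz0 : z = 0 := by
    have h0 : (inner ℂ z z : ℂ) = 0 := hCz z hzK
    simpa using inner_self_eq_zero.mp h0
  have := hV1z
  rw [hz0, map_zero] at this
  exact this.symm
end


set_option maxHeartbeats 1000000 in
/-- If `(ker C(V₁,V₂))ᗮ = ker (V₁V₂)*`, then
`dim ker V₁* = dim ker V₂*`; in particular if `ker (V₁V₂)*` is finite-dimensional, its
dimension is even. -/
theorem stmt_5 {H : Type*} [NormedAddCommGroup H] [InnerProductSpace ℂ H] [CompleteSpace H]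
    (V₁ V₂ : H →L[ℂ] H)
    (hpair : IsIsometricPair V₁ V₂)
    (h : (LinearMap.ker ((defectOp V₁ V₂ : H →L[ℂ] H) : H →ₗ[ℂ] H))ᗮ = LinearMap.ker ((adjoint (V₁ ∘L V₂) : H →L[ℂ] H) : H →ₗ[ℂ] H)) :
    Module.rank ℂ (LinearMap.ker ((adjoint V₁ : H →L[ℂ] H) : H →ₗ[ℂ] H)) =
        Module.rank ℂ (LinearMap.ker ((adjoint V₂ : H →L[ℂ] H) : H →ₗ[ℂ] H)) ∧
      (FiniteDimensional ℂ (LinearMap.ker ((adjoint (V₁ ∘L V₂) : H →L[ℂ] H) : H →ₗ[ℂ] H)) →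
        Even (Module.finrank ℂ (LinearMap.ker ((adjoint (V₁ ∘L V₂) : H →L[ℂ] H) : H →ₗ[ℂ] H)))) := by
  obtain ⟨hi1, hi2, hc⟩ : (∀ x : H, ‖V₁ x‖ = ‖x‖) ∧ (∀ x : H, ‖V₂ x‖ = ‖x‖) ∧ V₁ ∘L V₂ = V₂ ∘L V₁ := hpair
  have h1 : adjoint V₁ ∘L V₁ = 1 := (norm_map_iff_adjoint_comp_self V₁).mp hi1
  have h2 : adjoint V₂ ∘L V₂ = 1 := (norm_map_iff_adjoint_comp_self V₂).mp hi2
  have hc' : adjoint V₂ ∘L adjoint V₁ = adjoint V₁ ∘L adjoint V₂ := by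
    rw [← adjoint_comp, ← adjoint_comp, hc]
  set M₁ := LinearMap.ker ((adjoint V₁ : H →L[ℂ] H) : H →ₗ[ℂ] H) with hM₁
  set M₂ := LinearMap.ker ((adjoint V₂ : H →L[ℂ] H) : H →ₗ[ℂ] H) with hM₂
  set K := LinearMap.ker ((adjoint (V₁ ∘L V₂) : H →L[ℂ] H) : H →ₗ[ℂ] H) with hK
  have hker : LinearMap.ker ((defectOp V₁ V₂ : H →L[ℂ] H) : H →ₗ[ℂ] H) = Kᗮ := by
    rw [← h, Submodule.orthogonal_orthogonal]
  -- the two injections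
  have hmem1 : ∀ x ∈ M₁, adjoint V₁ (V₂ x) ∈ M₂ := by
    intro x hx
    have : adjoint V₂ (adjoint V₁ (V₂ x)) = adjoint V₁ (adjoint V₂ (V₂ x)) := by
      have := congrArg (fun f => f (V₂ x)) hc'
      simpa using this
    have hVV : adjoint V₂ (V₂ x) = x := by
      have := congrArg (fun f => f x) h2
      simpa using this
    simp only [hM₂, LinearMap.mem_ker, ContinuousLinearMap.coe_coe]
    rw [this, hVV]; exact hx
  have hmem2 : ∀ y ∈ M₂, adjoint V₂ (V₁ y) ∈ M₁ := by
    intro y hy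
    have : adjoint V₂ (adjoint V₁ (V₁ y)) = adjoint V₁ (adjoint V₂ (V₁ y)) := by
      have := congrArg (fun f => f (V₁ y)) hc'
      simpa using this
    have hVV : adjoint V₁ (V₁ y) = y := by
      have := congrArg (fun f => f y) h1
      simpa using this
    simp only [hM₁, LinearMap.mem_ker, ContinuousLinearMap.coe_coe]
    rw [← this, hVV]; exact hy
  let f : M₁ →ₗ[ℂ] M₂ :=
    LinearMap.restrict ((adjoint V₁ ∘L V₂ : H →L[ℂ] H) : H →ₗ[ℂ] H) hmem1
  let g : M₂ →ₗ[ℂ] M₁ :=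
    LinearMap.restrict ((adjoint V₂ ∘L V₁ : H →L[ℂ] H) : H →ₗ[ℂ] H) hmem2
  have hfinj : Function.Injective f := by
    rw [injective_iff_map_eq_zero]
    intro a ha
    have ha' : adjoint V₁ (V₂ (a : H)) = 0 := by
      have := Subtype.ext_iff.mp ha
      simpa [f] using this
    have := key1 V₁ V₂ h2 hker (a : H) a.2 ha'
    exact Subtype.ext this
  have hginj : Function.Injective g := by
    rw [injective_iff_map_eq_zero]
    intro a ha
    have ha' : adjoint V₂ (V₁ (a : H)) = 0 := by
      have := Subtype.ext_iff.mp ha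
      simpa [g] using this
    have := key2 V₁ V₂ h1 hker (a : H) a.2 ha'
    exact Subtype.ext this
  have hrank : Module.rank ℂ M₁ = Module.rank ℂ M₂ :=
    le_antisymm (LinearMap.rank_le_of_injective f hfinj)
      (LinearMap.rank_le_of_injective g hginj)
  refine ⟨hrank, ?_⟩
  intro hfin
  -- decomposition K = M₁ ⊔ V₁ M₂
  have hV₁inj : Function.Injective (V₁ : H →ₗ[ℂ] H) := by
    intro a b hab
    have := congrArg (adjoint V₁) hab
    have ha := congrArg (fun f => f a) h1
    have hb := congrArg (fun f => f b) h1
    simp only [comp_apply, one_apply] at ha hb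
    simpa [ha, hb] using this
  set N := Submodule.map (V₁ : H →ₗ[ℂ] H) M₂ with hN
  have hM₁K : M₁ ≤ K := by
    intro x hx
    simp only [hK, LinearMap.mem_ker, ContinuousLinearMap.coe_coe, adjoint_comp, comp_apply]
    simp only [hM₁, LinearMap.mem_ker, ContinuousLinearMap.coe_coe] at hx
    rw [hx, map_zero]
  have hNK : N ≤ K := by
    rintro _ ⟨y, hy, rfl⟩
    simp only [hK, LinearMap.mem_ker, adjoint_comp, comp_apply]
    have hVV : adjoint V₁ (V₁ y) = y := by
      have := congrArg (fun f => f y) h1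
      simpa using this
    simp only [hM₂, LinearMap.mem_ker] at hy
    simpa [hVV] using hy
  have hsup : M₁ ⊔ N = K := by
    apply le_antisymm (sup_le hM₁K hNK)
    intro z hz
    have hz2 : adjoint V₁ z ∈ M₂ := by
      simp only [hM₂, LinearMap.mem_ker, ContinuousLinearMap.coe_coe]
      simp only [hK, LinearMap.mem_ker, ContinuousLinearMap.coe_coe, adjoint_comp, comp_apply] at hz
      exact hz
    have hz1 : z - V₁ (adjoint V₁ z) ∈ M₁ := by
      simp only [hM₁, LinearMap.mem_ker, ContinuousLinearMap.coe_coe, map_sub]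
      have := congrArg (fun f => f (adjoint V₁ z)) h1
      simp only [comp_apply, one_apply] at this
      rw [this]; exact sub_self _
    have : z = (z - V₁ (adjoint V₁ z)) + V₁ (adjoint V₁ z) := by abel
    rw [this]
    exact Submodule.add_mem_sup hz1 ⟨adjoint V₁ z, hz2, rfl⟩
  have hinf : M₁ ⊓ N = ⊥ := by
    rw [Submodule.eq_bot_iff]
    rintro x ⟨hx1, y, hy, rfl⟩
    have hVV : adjoint V₁ (V₁ y) = y := by
      have := congrArg (fun f => f y) h1
      simpa using this
    simp only [hM₁, LinearMap.mem_ker] at hx1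
    have : y = 0 := by rw [← hVV]; exact hx1
    rw [this, map_zero]
  haveI : FiniteDimensional ℂ M₁ := Submodule.finiteDimensional_of_le hM₁K
  haveI : FiniteDimensional ℂ N := Submodule.finiteDimensional_of_le hNK
  haveI : FiniteDimensional ℂ M₂ :=
    Module.Finite.of_injective (Submodule.equivMapOfInjective _ hV₁inj M₂).toLinearMap
      (Submodule.equivMapOfInjective _ hV₁inj M₂).injective
  have hNM₂ : Module.finrank ℂ N = Module.finrank ℂ M₂ :=
    (LinearEquiv.finrank_eq (Submodule.equivMapOfInjective _ hV₁inj M₂)).symm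
  have hfr : Module.finrank ℂ M₁ = Module.finrank ℂ M₂ := by
    have := hrank
    rw [← Module.finrank_eq_rank, ← Module.finrank_eq_rank] at this
    exact_mod_cast this
  have hKr : Module.finrank ℂ K = Module.finrank ℂ M₁ + Module.finrank ℂ N := by
    have := Submodule.finrank_sup_add_finrank_inf_eq M₁ N
    rw [hsup, hinf] at this
    simpa using this
  rw [hKr, hNM₂, ← hfr]
  exact ⟨Module.finrank ℂ M₁, rfl⟩
end
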